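/- If I is a non-zero prime ideal of the tropical Laurent polynomial semiring T[x₁^{±1},…,x_n^{±1}], then Bend(I), the congruence generated by the bend relations of elements of I, is a prime congruence. -/

import Mathlib

/-- The tropical semifield `𝕋 = (ℝ ∪ {-∞}, max, +)`, realized as
`Tropical (WithTop (OrderDual ℝ))`: tropical addition is `max` and tropical
multiplication is ordinary addition of reals, `0 = -∞`. -/
abbrev T : Type := Tropical (WithTop (OrderDual ℝ))

/-- The tropical Laurent polynomial semiring `T[x₁^{±1},…,x_n^{±1}]`. -/
abbrev TLaur (n : ℕ) : Type := AddMonoidAlgebra T (Fin n → ℤ)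

/-- The tropical polynomial semiring `T[x₁,…,x_n]`. -/
abbrev TPoly (n : ℕ) : Type := AddMonoidAlgebra T (Fin n → ℕ)

/-- View an element of a monomial-algebra over `T` as a finitely supported function. -/
def toF {G : Type} (f : AddMonoidAlgebra T G) : G →₀ T := f.coeff

/-- The twisted product of pairs over a commutative semiring. -/
def tw {R : Type*} [CommSemiring R] (α β : R × R) : R × R :=
  (α.1 * β.1 + α.2 * β.2, α.1 * β.2 + α.2 * β.1)

/-- A congruence is prime if it is proper and whenever the twisted product of two
pairs lies in it, one of the pairs lies in it. -/
def IsPrimeCon {R : Type*} [CommSemiring R] (C : RingCon R) : Prop :=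
  (∃ a b : R, ¬ C a b) ∧
    ∀ α β : R × R, C (tw α β).1 (tw α β).2 → C α.1 α.2 ∨ C β.1 β.2

/-- All bend relations of `f` (the pairs `(f, f with its i-th term deleted)`,
for `i` in the support of `f`) lie in the congruence `C`. -/
def bendIn {G : Type} [AddCommMonoid G] (C : RingCon (AddMonoidAlgebra T G))
    (f : AddMonoidAlgebra T G) : Prop :=
  ∀ i ∈ (toF f).support, C f (AddMonoidAlgebra.ofCoeff (Finsupp.erase i (toF f)))

/-- `Bend I`: the congruence generated by the bend relations of all elements of `I`. -/
noncomputable def Bend {G : Type} [AddCommMonoid G] (I : Set (AddMonoidAlgebra T G)) :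
    RingCon (AddMonoidAlgebra T G) :=
  ringConGen (fun f g => f ∈ I ∧ ∃ i ∈ (toF f).support, g = AddMonoidAlgebra.ofCoeff (Finsupp.erase i (toF f)))

/-!
A nonzero prime ideal `I` contains a binomial: in an additively idempotent semiring
`(a + b)(a + h)(b + h) = (a + b + h)(ab + ah + bh)`, so primality replaces an element of `I` with
at least three terms by a shorter one. Scaling by a unit monomial gives `1 + μ ∈ I` with `μ` a
monomial of nonzero exponent, and its two bend relations give `μ ≡ 1`. Primality applied to
`(1 + μ + v)(v(1 + μ) + 1) = (1 + μ)(v(1 + μ) + 1 + v²)`, followed by a bend relation of the factor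
that lies in `I`, gives `1 + v ≡ 1` or `1 + v ≡ v` for every monomial `v`. Hence any two monomials
are comparable modulo `Bend I`, every class is the class of a monomial, and the quotient is an
additively selective semiring whose nonzero elements are units; there `ac + bd = ad + bc` forces
`a = b` or `c = d`. The congruence is proper because a bend relation `(f, f_î)` never has exactly
one side zero: `f_î = 0` would put a unit monomial into `I`.
-/

open AddMonoidAlgebra

section SelectiveSemiring

variable {S : Type*} [CommSemiring S]

theorem eq_or_eq_of_mul_add_mul_eq_of_add_eq_left (hunit : ∀ x : S, x = 0 ∨ IsUnit x)
    (hsel : ∀ x y : S, x + y = x ∨ x + y = y) {a b c d : S} (hab : a + b = a) (hcd : c + d = c)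
    (h : a * c + b * d = a * d + b * c) : a = b ∨ c = d := by
  have hidem : ∀ x : S, x + x = x := fun x => (hsel x x).elim id id
  have hac : a * c = a * d + b * c :=
    calc a * c = (a + b) * (c + d) := by rw [hab, hcd]
      _ = a * c + b * d + (a * d + b * c) := by ring
      _ = a * d + b * c := by rw [h, hidem]
  rcases hsel (a * d) (b * c) with hle | hle <;> rw [hle] at hac
  · rcases hunit a with rfl | ha
    · exact .inl (by simpa using hab.symm)
    · exact .inr (ha.mul_left_cancel hac)
  · rcases hunit c with rfl | hc
    · exact .inr (by simpa using hcd.symm)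
    · exact .inl (hc.mul_right_cancel hac)

theorem eq_or_eq_of_mul_add_mul_eq (hunit : ∀ x : S, x = 0 ∨ IsUnit x)
    (hsel : ∀ x y : S, x + y = x ∨ x + y = y) {a b c d : S}
    (h : a * c + b * d = a * d + b * c) : a = b ∨ c = d := by
  wlog hab : a + b = a generalizing a b
  · have hba : b + a = b := by rw [add_comm]; exact (hsel a b).resolve_left hab
    exact (this (by rw [add_comm (b * c), ← h, add_comm]) hba).imp Eq.symm id
  wlog hcd : c + d = c generalizing c d
  · have hdc : d + c = d := by rw [add_comm]; exact (hsel c d).resolve_left hcd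
    exact (this h.symm hdc).imp id Eq.symm
  exact eq_or_eq_of_mul_add_mul_eq_of_add_eq_left hunit hsel hab hcd h

end SelectiveSemiring

def zeroIffCon (R : Type*) [Semiring R] [NoZeroDivisors R]
    (hR : ∀ x y : R, x + y = 0 → x = 0) : RingCon R where
  r x y := x = 0 ↔ y = 0
  iseqv := ⟨fun _ => Iff.rfl, Iff.symm, Iff.trans⟩
  add' {w x y z} hwx hyz := by
    have add_eq_zero : ∀ a b : R, a + b = 0 ↔ a = 0 ∧ b = 0 := fun a b =>
      ⟨fun h => ⟨hR a b h, hR b a (by rwa [add_comm])⟩, fun h => by simp [h]⟩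
    simp only [add_eq_zero, hwx, hyz]
  mul' hwx hyz := by simp only [mul_eq_zero, hwx, hyz]

namespace Tropical

theorem add_eq_left_or_eq_right {R : Type*} [LinearOrder R] (x y : Tropical R) :
    x + y = x ∨ x + y = y :=
  (le_total x y).imp (fun h => add_eq_left h) (fun h => add_eq_right h)

theorem mul_inv_cancel_of_ne_zero {R : Type*} [LinearOrderedAddCommGroupWithTop R]
    {c : Tropical R} (hc : c ≠ 0) : c * c⁻¹ = 1 :=
  untrop_injective (LinearOrderedAddCommGroupWithTop.add_neg_cancel_of_ne_top
    fun h => hc (untrop_injective h))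

end Tropical

section IdempotentSemiring

variable {S : Type*} [CommSemiring S] {P : Ideal S}

theorem Ideal.IsPrime.add_mem_or_of_add_add_mem (hS : ∀ x : S, x + x = x) (hP : P.IsPrime)
    {a b h : S} (habh : a + b + h ∈ P) : a + b ∈ P ∨ a + h ∈ P ∨ b + h ∈ P := by
  have h2 : ∀ x : S, x * 2 = x := fun x => by rw [mul_two, hS]
  have h3 : ∀ x : S, x * 3 = x := fun x => by
    rw [show (3 : S) = 2 + 1 by norm_num, mul_add, h2, mul_one, hS]
  have key : (a + b) * ((a + h) * (b + h)) = (a + b + h) * (a * b + a * h + b * h) := by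
    ring_nf
    simp only [h2, h3]
  have hmem : (a + b) * ((a + h) * (b + h)) ∈ P := key ▸ P.mul_mem_right _ habh
  exact (hP.mem_or_mem hmem).imp_right hP.mem_or_mem

theorem Ideal.IsPrime.add_add_mem_or_mul_add_one_mem (hS : ∀ x : S, x + x = x) (hP : P.IsPrime)
    {u : S} (hu : 1 + u ∈ P) (v : S) : 1 + u + v ∈ P ∨ v * (1 + u) + 1 ∈ P := by
  have h2 : ∀ x : S, x * 2 = x := fun x => by rw [mul_two, hS]
  have key : (1 + u + v) * (v * (1 + u) + 1) = (1 + u) * (v * (1 + u) + 1 + v * v) := by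
    ring_nf
    simp only [h2]
  exact hP.mem_or_mem (key ▸ P.mul_mem_right _ hu)

end IdempotentSemiring

namespace AddMonoidAlgebra

section Support

variable {R G : Type*} [Semiring R]

theorem card_support_single_add_le (a : G) (c : R) (g : AddMonoidAlgebra R G) :
    (single a c + g).coeff.support.card ≤ g.coeff.support.card + 1 := by
  classical
  have hsub : (single a c + g).coeff.support ⊆ insert a g.coeff.support := by
    intro x
    by_cases hx : x = a <;> simp [hx]
  exact (Finset.card_le_card hsub).trans (Finset.card_insert_le _ _)

theorem card_support_erase_add_one {f : AddMonoidAlgebra R G} {a : G} (ha : a ∈ f.coeff.support) :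
    (f.erase a).coeff.support.card + 1 = f.coeff.support.card := by
  classical
  rw [coeff_erase, Finsupp.support_erase, Finset.card_erase_add_one ha]

end Support

variable {G : Type} [AddCommGroup G]

theorem tropical_add_self (f : AddMonoidAlgebra T G) : f + f = f := by
  ext; simp

theorem tropical_eq_zero_of_add_eq_zero {f g : AddMonoidAlgebra T G} (h : f + g = 0) : f = 0 := by
  ext a
  simpa using (Tropical.add_eq_zero_iff.1 (congrArg (fun x => x.coeff a) h)).1

theorem tropical_single_mul_single_neg_inv (a : G) {c : T} (hc : c ≠ 0) :
    single a c * single (-a) c⁻¹ = (1 : AddMonoidAlgebra T G) := by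
  rw [single_mul_single, add_neg_cancel, Tropical.mul_inv_cancel_of_ne_zero hc, one_def]

theorem tropical_isUnit_single (a : G) {c : T} (hc : c ≠ 0) :
    IsUnit (single a c : AddMonoidAlgebra T G) :=
  IsUnit.of_mul_eq_one _ (tropical_single_mul_single_neg_inv a hc)

end AddMonoidAlgebra

section Bend

variable {G : Type} [AddCommGroup G] {I : Ideal (AddMonoidAlgebra T G)}

theorem single_notMem_of_ne_top (hI : I ≠ ⊤) (a : G) {c : T} (hc : c ≠ 0) : single a c ∉ I :=
  fun h => hI (Ideal.eq_top_of_isUnit_mem I h (tropical_isUnit_single a hc))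

theorem exists_single_add_single_mem (hI : I.IsPrime) {f : AddMonoidAlgebra T G} (hfI : f ∈ I)
    (hf : f ≠ 0) : ∃ a b : G, ∃ c d : T, a ≠ b ∧ c ≠ 0 ∧ d ≠ 0 ∧ single a c + single b d ∈ I := by
  induction hk : f.coeff.support.card using Nat.strong_induction_on generalizing f with
  | _ k ih =>
  obtain ⟨a, ha⟩ := Finsupp.support_nonempty_iff.2 (mt coeff_eq_zero.1 hf)
  set g := f.erase a
  have hfa : f.coeff a ≠ 0 := Finsupp.mem_support_iff.1 ha
  have hfg : single a (f.coeff a) + g = f := single_add_erase a f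
  have hg : g ≠ 0 := by
    intro hg
    rw [hg, add_zero] at hfg
    exact single_notMem_of_ne_top hI.ne_top a hfa (by rwa [hfg])
  obtain ⟨b, hb⟩ := Finsupp.support_nonempty_iff.2 (mt coeff_eq_zero.1 hg)
  set h := g.erase b
  have hgb : g.coeff b ≠ 0 := Finsupp.mem_support_iff.1 hb
  have hgh : single b (g.coeff b) + h = g := single_add_erase b g
  have hab : a ≠ b := by
    rintro rfl
    simp [g] at hgb
  by_cases hh : h = 0
  · rw [hh, add_zero] at hgh
    exact ⟨a, b, _, _, hab, hfa, hgb, by rwa [hgh, hfg]⟩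
  have hcard : h.coeff.support.card + 2 = k := by
    rw [← hk, ← card_support_erase_add_one ha, ← card_support_erase_add_one hb]
  have hshorter : ∀ (p : G) (r : T), r ≠ 0 → single p r + h ∈ I →
      ∃ a b : G, ∃ c d : T, a ≠ b ∧ c ≠ 0 ∧ d ≠ 0 ∧ single a c + single b d ∈ I :=
    fun p r hr hmem => ih _ (by have := card_support_single_add_le p r h; omega) hmem
      (fun h0 => hr (single_eq_zero.1 (tropical_eq_zero_of_add_eq_zero h0))) rfl
  rcases hI.add_mem_or_of_add_add_mem tropical_add_self (by rwa [add_assoc, hgh, hfg])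
    with hAB | hAh | hBh
  · exact ⟨a, b, _, _, hab, hfa, hgb, hAB⟩
  · exact hshorter a _ hfa hAh
  · exact hshorter b _ hgb hBh

theorem exists_one_add_single_mem (hI : I.IsPrime) (hI0 : I ≠ ⊥) :
    ∃ m : G, m ≠ 0 ∧ ∃ e : T, e ≠ 0 ∧ 1 + single m e ∈ I := by
  obtain ⟨f, hfI, hf⟩ := Submodule.exists_mem_ne_zero_of_ne_bot hI0
  obtain ⟨a, b, c, d, hab, hc, hd, hmem⟩ := exists_single_add_single_mem hI hfI hf
  refine ⟨b - a, sub_ne_zero.2 hab.symm, d * c⁻¹, ?_, ?_⟩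
  · exact mul_ne_zero hd (right_ne_zero_of_mul_eq_one (Tropical.mul_inv_cancel_of_ne_zero hc))
  · have := I.mul_mem_right (single (-a) c⁻¹) hmem
    rwa [add_mul, tropical_single_mul_single_neg_inv a hc, single_mul_single,
      ← sub_eq_add_neg] at this

noncomputable abbrev bendMk (I : Ideal (AddMonoidAlgebra T G)) :
    AddMonoidAlgebra T G →+* (Bend (I : Set (AddMonoidAlgebra T G))).Quotient :=
  (Bend (I : Set (AddMonoidAlgebra T G))).mk'

theorem bendMk_single_add {a : G} {c : T} {g : AddMonoidAlgebra T G}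
    (hf : single a c + g ∈ I) (hg : g.coeff a = 0) :
    bendMk I (single a c + g) = bendMk I g := by
  by_cases hc : c = 0
  · rw [hc, single_zero, zero_add]
  refine (RingCon.eq _).2 (RingConGen.Rel.of _ _ ⟨hf, a, ?_, ?_⟩)
  · simp [toF, hg, hc]
  · ext b
    by_cases hb : b = a <;> simp [toF, hb, hg]

theorem bendMk_add_self (x : AddMonoidAlgebra T G) : bendMk I x + bendMk I x = bendMk I x := by
  rw [← map_add, tropical_add_self]

theorem bendMk_single_eq_one {m₀ : G} (hm₀ : m₀ ≠ 0) {e : T} (hμ : 1 + single m₀ e ∈ I) :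
    bendMk I (single m₀ e) = 1 := by
  rw [one_def] at hμ
  have h₁ : bendMk I (single 0 1 + single m₀ e) = bendMk I (single m₀ e) :=
    bendMk_single_add hμ (by simp [Ne.symm hm₀])
  have h₂ : bendMk I (single m₀ e + single 0 1) = bendMk I (single 0 1) :=
    bendMk_single_add (by rwa [add_comm]) (by simp [hm₀])
  rw [← h₁, add_comm, h₂, ← one_def, map_one]

theorem one_add_bendMk_single_zero (d : T) :
    1 + bendMk I (single 0 d) = 1 ∨ 1 + bendMk I (single 0 d) = bendMk I (single 0 d) := by
  rw [← map_one (bendMk I), ← map_add, one_def, ← single_add]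
  rcases Tropical.add_eq_left_or_eq_right 1 d with h | h <;> rw [h] <;> simp

theorem one_add_bendMk_single_of_ne (hI : I.IsPrime) {m₀ : G} (hm₀ : m₀ ≠ 0) {e : T}
    (hμ : 1 + single m₀ e ∈ I) {m : G} (hm : m ≠ 0) (hmm₀ : m ≠ m₀) (hmm₀' : m + m₀ ≠ 0) (d : T) :
    1 + bendMk I (single m d) = 1 ∨ 1 + bendMk I (single m d) = bendMk I (single m d) := by
  set μ : AddMonoidAlgebra T G := single m₀ e
  set v : AddMonoidAlgebra T G := single m d
  have hπμ : bendMk I μ = 1 := bendMk_single_eq_one hm₀ hμ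
  rcases hI.add_add_mem_or_mul_add_one_mem tropical_add_self hμ v with hA | hB
  · left
    rw [add_comm] at hA
    have h := bendMk_single_add hA (by simp [μ, one_def, Ne.symm hm, Ne.symm hmm₀])
    rwa [map_add, map_add, map_one, hπμ, ← map_one (bendMk I), bendMk_add_self, add_comm] at h
  · right
    rw [mul_add, mul_one, add_comm, one_def] at hB
    have h := bendMk_single_add hB (by simp [v, μ, single_mul_single, Ne.symm hm, Ne.symm hmm₀'])
    rwa [← one_def, map_add, map_one, map_add, map_mul, hπμ, mul_one, bendMk_add_self] at h

theorem one_add_bendMk_single (hI : I.IsPrime) (hI0 : I ≠ ⊥) (m : G) (d : T) :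
    1 + bendMk I (single m d) = 1 ∨ 1 + bendMk I (single m d) = bendMk I (single m d) := by
  obtain ⟨m₀, hm₀, e, he, hμ⟩ := exists_one_add_single_mem hI hI0
  have hπμ := bendMk_single_eq_one hm₀ hμ
  -- For `m ∈ {0, m₀, -m₀}` the bends of `one_add_bendMk_single_of_ne` would erase several terms;
  -- instead, `single m₀ e ≡ 1` makes `single m d` congruent to a constant.
  by_cases hm : m = 0
  · subst hm
    exact one_add_bendMk_single_zero d
  by_cases hmm₀ : m = m₀
  · subst hmm₀
    have h : bendMk I (single m d) = bendMk I (single 0 (d * e⁻¹)) := by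
      rw [← mul_one (bendMk I (single 0 _)), ← hπμ, ← map_mul, single_mul_single, zero_add,
        mul_assoc, mul_comm e⁻¹, Tropical.mul_inv_cancel_of_ne_zero he, mul_one]
    rw [h]
    exact one_add_bendMk_single_zero _
  by_cases hmm₀' : m + m₀ = 0
  · have h : bendMk I (single m d) = bendMk I (single 0 (d * e)) := by
      rw [← hmm₀', ← single_mul_single, map_mul, hπμ, mul_one]
    rw [h]
    exact one_add_bendMk_single_zero _
  exact one_add_bendMk_single_of_ne hI hm₀ hμ hm hmm₀ hmm₀' d

theorem bendMk_single_add_bendMk_single (hI : I.IsPrime) (hI0 : I ≠ ⊥) (a b : G) (c d : T) :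
    bendMk I (single a c) + bendMk I (single b d) = bendMk I (single a c) ∨
      bendMk I (single a c) + bendMk I (single b d) = bendMk I (single b d) := by
  by_cases hc : c = 0
  · simp [hc]
  have hb : single b d = single a c * single (b - a) (c⁻¹ * d) := by
    rw [single_mul_single, add_sub_cancel, ← mul_assoc, Tropical.mul_inv_cancel_of_ne_zero hc,
      one_mul]
  rw [hb, map_mul, ← mul_one_add]
  rcases one_add_bendMk_single hI hI0 (b - a) (c⁻¹ * d) with h | h <;> rw [h]
  · exact .inl (mul_one _)
  · exact .inr rfl

theorem exists_bendMk_single_eq (hI : I.IsPrime) (hI0 : I ≠ ⊥)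
    (x : (Bend (I : Set (AddMonoidAlgebra T G))).Quotient) : ∃ a c, bendMk I (single a c) = x := by
  obtain ⟨f, rfl⟩ := RingCon.mk'_surjective _ x
  induction f using AddMonoidAlgebra.induction_linear with
  | zero => exact ⟨0, 0, by simp⟩
  | add f g hf hg =>
    obtain ⟨a, c, hf⟩ := hf
    obtain ⟨b, d, hg⟩ := hg
    rw [map_add, ← hf, ← hg]
    rcases bendMk_single_add_bendMk_single hI hI0 a b c d with h | h
    · exact ⟨a, c, h.symm⟩
    · exact ⟨b, d, h.symm⟩
  | single a c => exact ⟨a, c, rfl⟩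

theorem bend_quotient_add_eq_left_or_eq_right (hI : I.IsPrime) (hI0 : I ≠ ⊥)
    (x y : (Bend (I : Set (AddMonoidAlgebra T G))).Quotient) : x + y = x ∨ x + y = y := by
  obtain ⟨a, c, rfl⟩ := exists_bendMk_single_eq hI hI0 x
  obtain ⟨b, d, rfl⟩ := exists_bendMk_single_eq hI hI0 y
  exact bendMk_single_add_bendMk_single hI hI0 a b c d

theorem bend_quotient_eq_zero_or_isUnit (hI : I.IsPrime) (hI0 : I ≠ ⊥)
    (x : (Bend (I : Set (AddMonoidAlgebra T G))).Quotient) : x = 0 ∨ IsUnit x := by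
  obtain ⟨a, c, rfl⟩ := exists_bendMk_single_eq hI hI0 x
  by_cases hc : c = 0
  · exact .inl (by simp [hc])
  · exact .inr ((tropical_isUnit_single a hc).map _)

theorem bend_le_zeroIffCon [UniqueSums G] (hI : I ≠ ⊤) :
    Bend (I : Set (AddMonoidAlgebra T G)) ≤
      zeroIffCon _ (fun _ _ => tropical_eq_zero_of_add_eq_zero) := by
  refine RingCon.ringConGen_le.2 ?_
  rintro f _ ⟨hf, a, ha, rfl⟩
  have hfa : f.coeff a ≠ 0 := Finsupp.mem_support_iff.1 ha
  have herase : f.erase a ≠ 0 := fun h0 => single_notMem_of_ne_top hI a hfa <| by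
    rwa [← add_zero (single a _), ← h0, single_add_erase]
  exact iff_of_false (fun h0 => hfa (by simp [h0])) herase

end Bend

/-- If `I` is a non-zero prime ideal of the tropical Laurent polynomial semiring,
then `Bend(I)` is a prime congruence. -/
theorem bend_of_prime_ideal_isPrime {n : ℕ} (I : Ideal (TLaur n))
    (hprime : I.IsPrime) (hnz : I ≠ ⊥) :
    IsPrimeCon (Bend (I : Set (TLaur n))) := by
  refine ⟨⟨0, 1, fun h => one_ne_zero ((bend_le_zeroIffCon hprime.ne_top h).1 rfl)⟩,
    fun α β h => ?_⟩
  simp only [tw, ← RingCon.eq, RingCon.coe_add, RingCon.coe_mul] at h ⊢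
  exact eq_or_eq_of_mul_add_mul_eq (bend_quotient_eq_zero_or_isUnit hprime hnz)
    (bend_quotient_add_eq_left_or_eq_right hprime hnz) h
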